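/- Let m = 2n with n ≥ 2, fix j ∈ K̄ with j² = ℏ, and let C ⊆ GL(m, K̄) be the set of diagonal matrices diag(t₁,…,t_{n−1}, ε, ε, t_{n−1}⁻¹,…,t₁⁻¹) with t₁,…,t_{n−1} ∈ K̄ˣ and ε ∈ {1,−1}. Let X₀ be the diagonal matrix with diagonal entries (1,…,1, j, j⁻¹, 1,…,1), where j sits in position n and j⁻¹ in position n+1. Then: (a) X₀ᵀ·S·X₀ = S; (b) for every σ ∈ Gal(K̄/K), X₀⁻¹·σ(X₀) ∈ C; and (c) there do not exist Q ∈ Mₘ(K̄) with all entries in the image of K and Qᵀ·S·Q = S, and T ∈ C, such that X₀ = Q·T. (Non-triviality of the Belavin–Drinfeld cohomology for o(2n) associated to the r-matrix with Γ₁ = {α_{n−1}}, Γ₂ = {α_n}, whose centralizer is C.) -/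

import Mathlib

open Matrix

noncomputable section

/-- `K = ℂ((ℏ))`, the field of formal Laurent series over `ℂ`. -/
abbrev K : Type := LaurentSeries ℂ

/-- The series variable `ℏ` of `K = ℂ((ℏ))`. -/
def hbar : K := HahnSeries.single (1 : ℤ) (1 : ℂ)

/-- A fixed algebraic closure of `K`. -/
abbrev Kbar : Type := AlgebraicClosure K

/-- The matrix `S` with 1's on the antidiagonal and 0 elsewhere
(`S_{i,k} = 1` iff `i + k = m + 1` in 1-based indexing). -/
def Smat (m : ℕ) : Matrix (Fin m) (Fin m) Kbar :=
  Matrix.of fun i k => if (i : ℕ) + (k : ℕ) + 1 = m then 1 else 0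

/-- The centralizer of the Belavin–Drinfeld `r`-matrix for `o(2n)` with
`Γ₁ = {α_{n−1}}`, `Γ₂ = {α_n}`: diagonal matrices
`diag(t₁,…,t_{n−1}, ε, ε, t_{n−1}⁻¹,…,t₁⁻¹)` with `ε = ±1`, expressed by: `T`
is diagonal, antidiagonally-mirrored diagonal entries have product `1`, and
the two middle diagonal entries are equal. -/
def Cset (n : ℕ) (hn : 2 ≤ n) : Set (Matrix (Fin (2 * n)) (Fin (2 * n)) Kbar) :=
  {T | T.IsDiag ∧
    (∀ i k : Fin (2 * n), (i : ℕ) + (k : ℕ) + 1 = 2 * n → T i i * T k k = 1) ∧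
    T ⟨n - 1, by omega⟩ ⟨n - 1, by omega⟩ = T ⟨n, by omega⟩ ⟨n, by omega⟩}

/-- The diagonal matrix `X₀ = diag(1,…,1, j, j⁻¹, 1,…,1)` with `j` in position
`n` and `j⁻¹` in position `n+1` (1-based). -/
def X0 (n : ℕ) (j : Kbar) : Matrix (Fin (2 * n)) (Fin (2 * n)) Kbar :=
  Matrix.diagonal fun p =>
    if (p : ℕ) = n - 1 then j else if (p : ℕ) = n then j⁻¹ else 1

/-!
`X₀` is orthogonal because its diagonal entries at mirrored positions are mutually inverse, and
`X₀⁻¹ σ(X₀) = diag(1,…,1, σj/j, j/σj, 1,…,1)` lies in `C` because `σ j = ±j`. If `X₀ = Q T` with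
`Q` over `K` and `T ∈ C`, the `(n,n)` entries give `j = q t` with `q ∈ K` and `t² = 1`, so
`ℏ = j² = q²` would be a square in `K`; but `ℏ` has odd order `1`.
-/

lemma hbar_ne_zero : hbar ≠ 0 :=
  HahnSeries.single_ne_zero one_ne_zero

lemma sq_ne_hbar (x : K) : x ^ 2 ≠ hbar := by
  intro h
  have hx : x ≠ 0 := by
    rintro rfl
    exact hbar_ne_zero (by simpa using h.symm)
  have := congrArg HahnSeries.order h
  rw [sq, HahnSeries.order_mul hx hx, hbar, HahnSeries.order_single one_ne_zero] at this
  omega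

lemma ne_zero_of_sq_eq_hbar {j : Kbar} (hj : j ^ 2 = algebraMap K Kbar hbar) : j ≠ 0 := by
  rintro rfl
  exact hbar_ne_zero ((algebraMap K Kbar).injective (by simpa using hj.symm))

section Diagonal

variable {m : Type*} [Fintype m] [DecidableEq m] {L : Type*} [Field L]

lemma diagonal_transpose_mul_mul_diagonal (d : m → L) (A : Matrix m m L)
    (h : ∀ i k, A i k ≠ 0 → d i * d k = 1) :
    (diagonal d)ᵀ * A * diagonal d = A := by
  ext i k
  rw [diagonal_transpose, mul_diagonal, diagonal_mul]
  by_cases hA : A i k = 0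
  · simp [hA]
  · rw [mul_right_comm, h i k hA, one_mul]

lemma inv_diagonal_mul_map_diagonal {F : Type*} [FunLike F L L] [RingHomClass F L L]
    (σ : F) (d : m → L) (hd : ∀ p, d p ≠ 0) :
    (diagonal d)⁻¹ * (diagonal d).map σ = diagonal fun p => (d p)⁻¹ * σ (d p) := by
  have hinv : (diagonal d)⁻¹ = diagonal fun p => (d p)⁻¹ := by
    refine inv_eq_left_inv ?_
    rw [diagonal_mul_diagonal, ← diagonal_one]
    exact congrArg diagonal (funext fun p => inv_mul_cancel₀ (hd p))
  rw [hinv, diagonal_map (map_zero σ), diagonal_mul_diagonal]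

end Diagonal

section Centralizer

variable {n : ℕ} (hn : 2 ≤ n)

lemma diagonal_mem_Cset (e : Fin (2 * n) → Kbar)
    (hmirror : ∀ i k : Fin (2 * n), (i : ℕ) + (k : ℕ) + 1 = 2 * n → e i * e k = 1)
    (hmid : e ⟨n - 1, by omega⟩ = e ⟨n, by omega⟩) :
    diagonal e ∈ Cset n hn :=
  ⟨isDiag_diagonal e, by simpa using hmirror, by simpa using hmid⟩

lemma sq_middle_of_mem_Cset {T : Matrix (Fin (2 * n)) (Fin (2 * n)) Kbar} (hT : T ∈ Cset n hn) :
    T ⟨n - 1, by omega⟩ ⟨n - 1, by omega⟩ ^ 2 = 1 := by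
  obtain ⟨-, hmirror, hmid⟩ := hT
  rw [sq]
  nth_rewrite 2 [hmid]
  exact hmirror _ _ (by simp only; omega)

end Centralizer

def x0Diag (n : ℕ) (j : Kbar) (p : Fin (2 * n)) : Kbar :=
  if (p : ℕ) = n - 1 then j else if (p : ℕ) = n then j⁻¹ else 1

lemma X0_eq_diagonal (n : ℕ) (j : Kbar) : X0 n j = diagonal (x0Diag n j) := rfl

section X0

variable {n : ℕ} (hn : 2 ≤ n) {j : Kbar}

lemma x0Diag_ne_zero (hj : j ≠ 0) (p : Fin (2 * n)) : x0Diag n j p ≠ 0 := by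
  unfold x0Diag
  split_ifs <;> simp [hj]

lemma x0Diag_mul_mirror (hj : j ≠ 0) {i k : Fin (2 * n)}
    (hik : (i : ℕ) + (k : ℕ) + 1 = 2 * n) : x0Diag n j i * x0Diag n j k = 1 := by
  unfold x0Diag
  split_ifs <;> first | omega | simp [hj]

lemma X0_transpose_mul_Smat_mul_X0 (hj : j ≠ 0) :
    (X0 n j)ᵀ * Smat (2 * n) * X0 n j = Smat (2 * n) := by
  refine diagonal_transpose_mul_mul_diagonal _ _ fun i k hS => x0Diag_mul_mirror hj ?_
  by_contra h
  exact hS (if_neg h)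

lemma inv_X0_mul_map_X0_mem_Cset (hj : j ^ 2 = algebraMap K Kbar hbar) (σ : Kbar ≃ₐ[K] Kbar) :
    (X0 n j)⁻¹ * (X0 n j).map σ ∈ Cset n hn := by
  have hj0 := ne_zero_of_sq_eq_hbar hj
  rw [X0_eq_diagonal, inv_diagonal_mul_map_diagonal σ _ (x0Diag_ne_zero hj0)]
  refine diagonal_mem_Cset hn _ (fun i k hik => ?_) ?_
  · calc (x0Diag n j i)⁻¹ * σ (x0Diag n j i) * ((x0Diag n j k)⁻¹ * σ (x0Diag n j k))
          = (x0Diag n j i * x0Diag n j k)⁻¹ * σ (x0Diag n j i * x0Diag n j k) := by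
            rw [map_mul, mul_inv]; ring
        _ = 1 := by rw [x0Diag_mul_mirror hj0 hik, inv_one, map_one, one_mul]
  · -- `σ` fixes `j ^ 2 ∈ K`, so `σ j = ±j` and `σ j / j = j / σ j`.
    have hσ : σ j ^ 2 = j ^ 2 := by rw [← map_pow, hj, AlgEquiv.commutes]
    have hσ0 : σ j ≠ 0 := (map_ne_zero σ).mpr hj0
    simp only [x0Diag, ↓reduceIte, show n ≠ n - 1 by omega, map_inv₀, inv_inv]
    field_simp
    linear_combination hσ

lemma X0_ne_mul_of_mem_Cset (hj : j ^ 2 = algebraMap K Kbar hbar)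
    {Q T : Matrix (Fin (2 * n)) (Fin (2 * n)) Kbar}
    (hQ : ∀ i k, Q i k ∈ (algebraMap K Kbar).range) (hT : T ∈ Cset n hn) : X0 n j ≠ Q * T := by
  intro hX
  have hjQT :
      j = Q ⟨n - 1, by omega⟩ ⟨n - 1, by omega⟩ * T ⟨n - 1, by omega⟩ ⟨n - 1, by omega⟩ := by
    have h := congrFun₂ hX ⟨n - 1, by omega⟩ ⟨n - 1, by omega⟩
    rw [X0_eq_diagonal, diagonal_apply_eq, ← hT.1.diagonal_diag, mul_diagonal] at h
    simpa [x0Diag] using h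
  obtain ⟨q, hq⟩ := hQ ⟨n - 1, by omega⟩ ⟨n - 1, by omega⟩
  refine sq_ne_hbar q ((algebraMap K Kbar).injective ?_)
  rw [map_pow, hq, ← hj, hjQT, mul_pow, sq_middle_of_mem_Cset hn hT, mul_one]

end X0

/-- Non-triviality of the Belavin–Drinfeld cohomology for `o(2n)` associated
to the `r`-matrix with `Γ₁ = {α_{n−1}}`, `Γ₂ = {α_n}`, whose centralizer is
`C`: the matrix `X₀` is an orthogonal cocycle with values in `C` which is not
equivalent to the identity. -/
theorem statement9 (n : ℕ) (hn : 2 ≤ n) (j : Kbar)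
    (hj : j ^ 2 = algebraMap K Kbar hbar) :
    (X0 n j)ᵀ * Smat (2 * n) * X0 n j = Smat (2 * n) ∧
    (∀ σ : Kbar ≃ₐ[K] Kbar, (X0 n j)⁻¹ * (X0 n j).map σ ∈ Cset n hn) ∧
    ¬ ∃ (Q T : Matrix (Fin (2 * n)) (Fin (2 * n)) Kbar),
        (∀ i k, Q i k ∈ (algebraMap K Kbar).range) ∧
        Qᵀ * Smat (2 * n) * Q = Smat (2 * n) ∧
        T ∈ Cset n hn ∧ X0 n j = Q * T := by
  refine ⟨X0_transpose_mul_Smat_mul_X0 (ne_zero_of_sq_eq_hbar hj),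
    inv_X0_mul_map_X0_mem_Cset hn hj, ?_⟩
  rintro ⟨Q, T, hQ, -, hT, hX⟩
  exact X0_ne_mul_of_mem_Cset hn hj hQ hT hX
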